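/- Let 0 < m ≤ M₂ and let U : ℝ^d → ℝ be twice continuously differentiable with m‖v‖² ≤ ⟨∇²U(y)v, v⟩ ≤ M₂‖v‖² for all y, v ∈ ℝ^d. Let g : [0,∞) → ℝ^d and let (x, v) and (x′, v′) be differentiable curves [0,∞) → ℝ^d × ℝ^d satisfying ẋ(t) = v(t), v̇(t) = −(1/M₂)∇U(x(t)) − 2v(t) + g(t) and ẋ′(t) = v′(t), v̇′(t) = −(1/M₂)∇U(x′(t)) − 2v′(t) + g(t), with the SAME forcing g. Then for all t ≥ 0: ‖x′(t) − x(t)‖ ≤ √2 · e^{−mt/(2M₂)} · (‖x′(0) − x(0)‖ + ‖v′(0) − v(0)‖). -/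

import Mathlib

set_option maxHeartbeats 1000000 in

theorem stmt_2 (d : ℕ) (m M₂ : ℝ) (hm : 0 < m) (hmM : m ≤ M₂)
    (U : EuclideanSpace ℝ (Fin d) → ℝ) (hU : ContDiff ℝ 2 U)
    (hHess : ∀ y v : EuclideanSpace ℝ (Fin d),
      m * ‖v‖ ^ 2 ≤ iteratedFDeriv ℝ 2 U y ![v, v] ∧
        iteratedFDeriv ℝ 2 U y ![v, v] ≤ M₂ * ‖v‖ ^ 2)
    (g x v x' v' : ℝ → EuclideanSpace ℝ (Fin d))
    (hx : ∀ t, 0 ≤ t → HasDerivAt x (v t) t)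
    (hv : ∀ t, 0 ≤ t →
      HasDerivAt v ((-(1 / M₂)) • gradient U (x t) - (2 : ℝ) • v t + g t) t)
    (hx' : ∀ t, 0 ≤ t → HasDerivAt x' (v' t) t)
    (hv' : ∀ t, 0 ≤ t →
      HasDerivAt v' ((-(1 / M₂)) • gradient U (x' t) - (2 : ℝ) • v' t + g t) t) :
    ∀ t, 0 ≤ t →
      ‖x' t - x t‖ ≤
        Real.sqrt 2 * Real.exp (-(m * t) / (2 * M₂)) * (‖x' 0 - x 0‖ + ‖v' 0 - v 0‖) := by
  have hM₂ : 0 < M₂ := hm.trans_le hmM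
  set κ : ℝ := m / M₂ with hκdef
  have hκ0 : 0 < κ := div_pos hm hM₂
  have hκ1 : κ ≤ 1 := (div_le_one hM₂).2 hmM
  have hdU : Differentiable ℝ U := hU.differentiable two_ne_zero
  have hdU' : Differentiable ℝ (fderiv ℝ U) :=
    (hU.fderiv_right (m := 1) (by norm_num)).differentiable one_ne_zero
  set f'' : EuclideanSpace ℝ (Fin d) →
      EuclideanSpace ℝ (Fin d) →L[ℝ] EuclideanSpace ℝ (Fin d) →L[ℝ] ℝ :=
    fun y => fderiv ℝ (fderiv ℝ U) y with hf''def
  have hf'' : ∀ y, HasFDerivAt (fderiv ℝ U) (f'' y) y := fun y => (hdU' y).hasFDerivAt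
  have hsymm : ∀ y a b, f'' y a b = f'' y b a := fun y a b =>
    second_derivative_symmetric (fun z => (hdU z).hasFDerivAt) (hf'' y) a b
  have hB : ∀ y a, m * ‖a‖ ^ 2 ≤ f'' y a a ∧ f'' y a a ≤ M₂ * ‖a‖ ^ 2 := by
    intro y a
    have h := hHess y a
    rwa [iteratedFDeriv_two_apply, Matrix.cons_val_zero, Matrix.cons_val_one,
      Matrix.cons_val_zero] at h
  -- pointwise key inequality
  have hkey : ∀ y z u : EuclideanSpace ℝ (Fin d),
      4 * (inner ℝ z u : ℝ) - (2 / M₂) * f'' y z u ≤ (2 - κ) * (‖z‖ ^ 2 + ‖u‖ ^ 2) := by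
    intro y z u
    have hApos : ∀ a : EuclideanSpace ℝ (Fin d),
        0 ≤ 4 * (inner ℝ a a : ℝ) - (2 / M₂) * f'' y a a := by
      intro a
      obtain ⟨h1, h2⟩ := hB y a
      generalize hba : (f'' y a a : ℝ) = b at h1 h2
      have h3 : (inner ℝ a a : ℝ) = ‖a‖ ^ 2 := real_inner_self_eq_norm_sq a
      rw [h3]
      have h4 : (2 / M₂) * b ≤ 2 * ‖a‖ ^ 2 := by
        rw [div_mul_eq_mul_div, div_le_iff₀ hM₂]; nlinarith
      nlinarith [sq_nonneg ‖a‖]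
    have hAub : ∀ a : EuclideanSpace ℝ (Fin d),
        4 * (inner ℝ a a : ℝ) - (2 / M₂) * f'' y a a ≤ (4 - 2 * κ) * ‖a‖ ^ 2 := by
      intro a
      obtain ⟨h1, h2⟩ := hB y a
      generalize hba : (f'' y a a : ℝ) = b at h1 h2
      have h3 : (inner ℝ a a : ℝ) = ‖a‖ ^ 2 := real_inner_self_eq_norm_sq a
      rw [h3]
      have h4 : 2 * κ * ‖a‖ ^ 2 ≤ (2 / M₂) * b := by
        rw [div_mul_eq_mul_div, le_div_iff₀ hM₂, hκdef]
        have e : 2 * (m / M₂) * ‖a‖ ^ 2 * M₂ = 2 * (m * ‖a‖ ^ 2) * (M₂ / M₂) := by ring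
        rw [e, div_self hM₂.ne']
        nlinarith
      nlinarith
    have hexp : f'' y (u - z) (u - z)
        = f'' y u u - f'' y z u - f'' y u z + f'' y z z := by
      simp only [map_sub, ContinuousLinearMap.sub_apply]
      ring
    have hinnexp : (inner ℝ (u - z) (u - z) : ℝ)
        = inner ℝ u u - inner ℝ z u - inner ℝ u z + inner ℝ z z := by
      rw [inner_sub_left, inner_sub_right, inner_sub_right]; ring
    have h0 := hApos (u - z)
    rw [hexp, hinnexp] at h0
    have hsy : f'' y u z = f'' y z u := hsymm y u z
    have hic : (inner ℝ u z : ℝ) = inner ℝ z u := real_inner_comm z u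
    have hu2 := hAub u
    have hz2 := hAub z
    have hiu : (inner ℝ u u : ℝ) = ‖u‖ ^ 2 := real_inner_self_eq_norm_sq u
    have hiz : (inner ℝ z z : ℝ) = ‖z‖ ^ 2 := real_inner_self_eq_norm_sq z
    rw [hsy, hic, hiu, hiz] at h0
    rw [hiu] at hu2
    rw [hiz] at hz2
    generalize (f'' y z u : ℝ) = b at *
    generalize (f'' y u u : ℝ) = bu at *
    generalize (f'' y z z : ℝ) = bz at *
    nlinarith
  -- gradient difference inequality via MVT
  have hgrad : ∀ p q u : EuclideanSpace ℝ (Fin d),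
      4 * (inner ℝ (q - p) u : ℝ) - (2 - κ) * (‖q - p‖ ^ 2 + ‖u‖ ^ 2)
        ≤ (2 / M₂) * (inner ℝ (gradient U q - gradient U p) u : ℝ) := by
    intro p q u
    set z : EuclideanSpace ℝ (Fin d) := q - p with hzq
    set φ : ℝ → ℝ := fun s => (2 / M₂) * fderiv ℝ U (p + s • z) u with hφ
    have hder : ∀ s : ℝ, HasDerivAt φ ((2 / M₂) * f'' (p + s • z) z u) s := by
      intro s
      have h1 : HasDerivAt (fun s : ℝ => p + s • z) z s := by
        simpa using ((hasDerivAt_id s).smul_const z).const_add p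
      have h2 : HasDerivAt (fun s : ℝ => fderiv ℝ U (p + s • z)) (f'' (p + s • z) z) s :=
        (hf'' (p + s • z)).comp_hasDerivAt s h1
      have h3 : HasDerivAt (fun s : ℝ => fderiv ℝ U (p + s • z) u)
          (f'' (p + s • z) z u) s := by
        simpa using h2.clm_apply (hasDerivAt_const s u)
      exact h3.const_mul _
    have hdiff : Differentiable ℝ φ := fun s => (hder s).differentiableAt
    have hlb : ∀ s : ℝ,
        4 * (inner ℝ z u : ℝ) - (2 - κ) * (‖z‖ ^ 2 + ‖u‖ ^ 2) ≤ deriv φ s := by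
      intro s
      rw [(hder s).deriv]
      have h := hkey (p + s • z) z u
      have h2 : (2 / M₂) * f'' (p + s • z) z u ≥
          4 * (inner ℝ z u : ℝ) - (2 - κ) * (‖z‖ ^ 2 + ‖u‖ ^ 2) := by linarith
      linarith
    have hmvt := mul_sub_le_image_sub_of_le_deriv hdiff hlb (zero_le_one)
    have hφ1 : φ 1 = (2 / M₂) * fderiv ℝ U q u := by
      have : p + (1 : ℝ) • z = q := by rw [one_smul, hzq]; abel
      simp only [hφ, this]
    have hφ0 : φ 0 = (2 / M₂) * fderiv ℝ U p u := by
      have : p + (0 : ℝ) • z = p := by rw [zero_smul, add_zero]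
      simp only [hφ, this]
    have hgq : (inner ℝ (gradient U q - gradient U p) u : ℝ)
        = fderiv ℝ U q u - fderiv ℝ U p u := by
      have e : ∀ y : EuclideanSpace ℝ (Fin d),
          (inner ℝ (gradient U y) u : ℝ) = fderiv ℝ U y u := fun y =>
        InnerProductSpace.toDual_symm_apply
      rw [inner_sub_left, e, e]
    rw [hφ1, hφ0, sub_zero, mul_one] at hmvt
    rw [hgq]
    linarith
  -- scalar inequality for the Lyapunov derivative
  have hscal : ∀ a b gd : EuclideanSpace ℝ (Fin d),
      4 * (inner ℝ a (a + b) : ℝ) - (2 - κ) * (‖a‖ ^ 2 + ‖a + b‖ ^ 2)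
        ≤ (2 / M₂) * inner ℝ gd (a + b) →
      ((inner ℝ a b : ℝ) + inner ℝ b a)
        + ((inner ℝ (a + b) (b + ((-(1 / M₂)) • gd - (2 : ℝ) • b)) : ℝ)
          + inner ℝ (b + ((-(1 / M₂)) • gd - (2 : ℝ) • b)) (a + b))
        ≤ -κ * ((inner ℝ a a : ℝ) + inner ℝ (a + b) (a + b)) := by
    intro a b gd h
    have n1 : ‖a‖ ^ 2 = (inner ℝ a a : ℝ) := (real_inner_self_eq_norm_sq a).symm
    have n2 : ‖a + b‖ ^ 2 = (inner ℝ (a + b) (a + b) : ℝ) :=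
      (real_inner_self_eq_norm_sq _).symm
    rw [n1, n2] at h
    have c1 : (inner ℝ b a : ℝ) = inner ℝ a b := real_inner_comm a b
    have c2 : (inner ℝ gd a : ℝ) = inner ℝ a gd := real_inner_comm a gd
    have c3 : (inner ℝ gd b : ℝ) = inner ℝ b gd := real_inner_comm b gd
    simp only [inner_add_right, inner_add_left, inner_sub_right, inner_sub_left,
      real_inner_smul_right, real_inner_smul_left, c1, c2, c3] at h ⊢
    have hdiv : (2 / M₂) * ((inner ℝ a gd : ℝ) + inner ℝ b gd)
        = 2 * ((1 / M₂) * ((inner ℝ a gd : ℝ) + inner ℝ b gd)) := by ring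
    nlinarith [h]
  -- dynamics
  obtain ⟨z, hzdef⟩ : ∃ z : ℝ → EuclideanSpace ℝ (Fin d), z = fun s => x' s - x s :=
    ⟨_, rfl⟩
  obtain ⟨w, hwdef⟩ : ∃ w : ℝ → EuclideanSpace ℝ (Fin d), w = fun s => v' s - v s :=
    ⟨_, rfl⟩
  obtain ⟨L, hLdef⟩ : ∃ L : ℝ → ℝ,
      L = fun s => (inner ℝ (z s) (z s) : ℝ) + inner ℝ (z s + w s) (z s + w s) := ⟨_, rfl⟩
  have hzd : ∀ s, 0 ≤ s → HasDerivAt z (w s) s := by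
    intro s hs
    rw [hzdef, hwdef]
    exact (hx' s hs).sub (hx s hs)
  have hwd : ∀ s, 0 ≤ s → HasDerivAt w
      ((-(1 / M₂)) • (gradient U (x' s) - gradient U (x s)) - (2 : ℝ) • w s) s := by
    intro s hs
    rw [hwdef]
    have h := (hv' s hs).sub (hv s hs)
    refine h.congr_deriv ?_
    simp only [smul_sub]
    abel
  have hLd : ∀ s, 0 ≤ s → ∃ D, HasDerivAt L D s ∧ D ≤ -κ * L s := by
    intro s hs
    have h1 := HasDerivAt.inner ℝ (hzd s hs) (hzd s hs)
    have hu : HasDerivAt (fun r => z r + w r)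
        (w s + ((-(1 / M₂)) • (gradient U (x' s) - gradient U (x s)) - (2 : ℝ) • w s)) s :=
      (hzd s hs).add (hwd s hs)
    have h2 := HasDerivAt.inner ℝ hu hu
    have hL' : HasDerivAt L
        (((inner ℝ (z s) (w s) : ℝ) + inner ℝ (w s) (z s))
          + ((inner ℝ (z s + w s) (w s + ((-(1 / M₂)) • (gradient U (x' s) - gradient U (x s))
              - (2 : ℝ) • w s)) : ℝ)
            + inner ℝ (w s + ((-(1 / M₂)) • (gradient U (x' s) - gradient U (x s))
              - (2 : ℝ) • w s)) (z s + w s))) s := by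
      rw [hLdef]; exact h1.add h2
    refine ⟨_, hL', ?_⟩
    have hgr := hgrad (x s) (x' s) (z s + w s)
    have hq : x' s - x s = z s := by rw [hzdef]
    rw [hq] at hgr
    have := hscal (z s) (w s) (gradient U (x' s) - gradient U (x s)) hgr
    rw [hLdef]
    exact this
  -- Gronwall
  obtain ⟨F, hFdef⟩ : ∃ F : ℝ → ℝ, F = fun s => Real.exp (κ * s) * L s := ⟨_, rfl⟩
  have hFd : ∀ s, 0 ≤ s → ∃ D, HasDerivAt F D s ∧ D ≤ 0 := by
    intro s hs
    obtain ⟨D, hD, hDle⟩ := hLd s hs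
    have hexp : HasDerivAt (fun r : ℝ => Real.exp (κ * r)) (Real.exp (κ * s) * κ) s := by
      simpa using ((hasDerivAt_id s).const_mul κ).exp
    have hF' : HasDerivAt F (Real.exp (κ * s) * κ * L s + Real.exp (κ * s) * D) s := by
      rw [hFdef]; exact hexp.mul hD
    refine ⟨_, hF', ?_⟩
    have hLpos : 0 ≤ L s := by
      rw [hLdef]
      exact add_nonneg (real_inner_self_nonneg) (real_inner_self_nonneg)
    have hep : (0 : ℝ) < Real.exp (κ * s) := Real.exp_pos _
    nlinarith [mul_le_mul_of_nonneg_left hDle hep.le]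
  have hant : AntitoneOn F (Set.Ici (0 : ℝ)) := by
    apply antitoneOn_of_deriv_nonpos (convex_Ici 0)
    · intro s hs
      exact ((hFd s hs).choose_spec.1).continuousAt.continuousWithinAt
    · intro s hs
      rw [interior_Ici] at hs
      exact ((hFd s hs.le).choose_spec.1).differentiableAt.differentiableWithinAt
    · intro s hs
      rw [interior_Ici] at hs
      obtain ⟨D, hD, hDle⟩ := hFd s hs.le
      rw [hD.deriv]
      exact hDle
  -- conclusion
  intro t ht
  have hF : F t ≤ F 0 := hant Set.self_mem_Ici ht ht
  rw [hFdef] at hF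
  simp only [mul_zero, Real.exp_zero, one_mul] at hF
  have hS0 : 0 ≤ ‖z 0‖ + ‖w 0‖ := add_nonneg (norm_nonneg _) (norm_nonneg _)
  have hL0 : L 0 ≤ 2 * (‖z 0‖ + ‖w 0‖) ^ 2 := by
    simp only [hLdef]
    have h1 : ‖z 0 + w 0‖ ≤ ‖z 0‖ + ‖w 0‖ := norm_add_le (z 0) (w 0)
    rw [real_inner_self_eq_norm_sq, real_inner_self_eq_norm_sq]
    have h2 : ‖z 0 + w 0‖ ^ 2 ≤ (‖z 0‖ + ‖w 0‖) ^ 2 :=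
      pow_le_pow_left₀ (norm_nonneg _) h1 2
    have h3 : ‖z 0‖ ^ 2 ≤ (‖z 0‖ + ‖w 0‖) ^ 2 :=
      pow_le_pow_left₀ (norm_nonneg _) (le_add_of_nonneg_right (norm_nonneg _)) 2
    linarith
  have hzt : ‖z t‖ ^ 2 ≤ L t := by
    simp only [hLdef]
    rw [real_inner_self_eq_norm_sq, real_inner_self_eq_norm_sq]
    exact le_add_of_nonneg_right (sq_nonneg _)
  have hLt : L t ≤ Real.exp (-(κ * t)) * (2 * (‖z 0‖ + ‖w 0‖) ^ 2) := by
    have h1 : Real.exp (κ * t) * L t ≤ 2 * (‖z 0‖ + ‖w 0‖) ^ 2 := le_trans hF hL0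
    have h2 := mul_le_mul_of_nonneg_left h1 (Real.exp_pos (-(κ * t))).le
    rw [← mul_assoc, ← Real.exp_add] at h2
    simpa using h2
  have hRsq : (Real.sqrt 2 * Real.exp (-(m * t) / (2 * M₂)) * (‖z 0‖ + ‖w 0‖)) ^ 2
      = Real.exp (-(κ * t)) * (2 * (‖z 0‖ + ‖w 0‖) ^ 2) := by
    have h2 : Real.exp (-(m * t) / (2 * M₂)) ^ 2 = Real.exp (-(κ * t)) := by
      rw [sq, ← Real.exp_add]
      congr 1
      rw [hκdef]
      field_simp
      ring
    have h3 : Real.sqrt 2 ^ 2 = 2 := Real.sq_sqrt (by norm_num)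
    rw [mul_pow, mul_pow, h2, h3]
    ring
  have hfin : ‖z t‖ ^ 2
      ≤ (Real.sqrt 2 * Real.exp (-(m * t) / (2 * M₂)) * (‖z 0‖ + ‖w 0‖)) ^ 2 := by
    rw [hRsq]; linarith
  have hR0 : 0 ≤ Real.sqrt 2 * Real.exp (-(m * t) / (2 * M₂)) * (‖z 0‖ + ‖w 0‖) :=
    mul_nonneg (mul_nonneg (Real.sqrt_nonneg _) (Real.exp_pos _).le) hS0
  have hmain := Real.sqrt_le_sqrt hfin
  rw [Real.sqrt_sq (norm_nonneg _), Real.sqrt_sq hR0] at hmain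
  simp only [hzdef, hwdef] at hmain
  exact hmain
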